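/- Let F be a finite field of odd cardinality q, ψ a nontrivial additive character of F with values in ℂ, χ the quadratic character of F, V an F-vector space of finite dimension n, and Q a quadratic form on V whose associated polar bilinear form is nondegenerate. Then for every a ∈ Fˣ, ∑_{v ∈ V} ψ(a·Q(v)) = χ(a)ⁿ · ∑_{v ∈ V} ψ(Q(v)). -/

import Mathlib

set_option maxHeartbeats 1000000

open Finset

section Aux

variable {F : Type*} [Field F] [Fintype F] [DecidableEq F]

/-- An additive character maps sums to products. -/
lemma addChar_map_sum {ι : Type*} {A : Type*} [AddCommMonoid A] (ψ : AddChar A ℂ)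
    (s : Finset ι) (f : ι → A) : ψ (∑ i ∈ s, f i) = ∏ i ∈ s, ψ (f i) := by
  classical
  induction s using Finset.cons_induction with
  | empty => simp
  | cons i s hi ih => rw [Finset.sum_cons, Finset.prod_cons, AddChar.map_add_eq_mul, ih]

/-- One-variable scaling: `∑ x, ψ(b·x²) = χ(b) · G(χ, ψ)` for `b ≠ 0`. -/
lemma one_dim_gauss_scaling (hF : ringChar F ≠ 2)
    (ψ : AddChar F ℂ) (hψ : ψ ≠ 1) {b : F} (hb : b ≠ 0) :
    (∑ x : F, ψ (b * x ^ 2)) =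
      ((quadraticChar F b : ℤ) : ℂ) *
        gaussSum ((quadraticChar F).ringHomComp (Int.castRingHom ℂ)) ψ := by
  set χ := (quadraticChar F).ringHomComp (Int.castRingHom ℂ) with hχ
  -- Step 1: fiberwise sum over t = x^2
  have step1 : (∑ x : F, ψ (b * x ^ 2)) =
      ∑ t : F, (((quadraticChar F t : ℤ) : ℂ) + 1) * ψ (b * t) := by
    rw [← Fintype.sum_fiberwise (fun x : F => x ^ 2) (fun x => ψ (b * x ^ 2))]
    refine Finset.sum_congr rfl fun t _ => ?_
    have hcard : ((Fintype.card {x : F // x ^ 2 = t}) : ℤ)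
        = quadraticChar F t + 1 := by
      have h := quadraticChar_card_sqrts hF t
      rwa [Set.toFinset_card] at h
    have heq : ∑ a : {x : F // x ^ 2 = t}, ψ (b * (a : F) ^ 2)
        = ∑ _a : {x : F // x ^ 2 = t}, ψ (b * t) :=
      Finset.sum_congr rfl fun a _ => by rw [a.2]
    rw [heq, Finset.sum_const, Finset.card_univ, nsmul_eq_mul]
    congr 1
    exact_mod_cast hcard
  rw [step1]
  simp_rw [add_mul, one_mul, Finset.sum_add_distrib]
  -- ∑ t, ψ (b * t) = 0
  have hψ0 : (∑ t : F, ψ (b * t)) = 0 := by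
    have hb' : Function.Bijective fun t : F => b * t :=
      (Equiv.mulLeft₀ b hb).bijective
    rw [Fintype.sum_bijective _ hb' _ (fun t => ψ t) (fun t => rfl)]
    exact AddChar.sum_eq_zero_of_ne_one hψ
  -- the χ-part is a shifted Gauss sum
  have hmain : (∑ t : F, ((quadraticChar F t : ℤ) : ℂ) * ψ (b * t))
      = ((quadraticChar F b : ℤ) : ℂ) * gaussSum χ ψ := by
    have hrw : (∑ t : F, ((quadraticChar F t : ℤ) : ℂ) * ψ (b * t))
        = gaussSum χ (AddChar.mulShift ψ b) := by
      refine Finset.sum_congr rfl fun t _ => ?_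
      simp [χ, AddChar.mulShift_apply, mul_comm b t]
    have hu := gaussSum_mulShift χ ψ (Units.mk0 b hb)
    have hq : χ b * χ b = 1 := by
      have h1 : quadraticChar F b * quadraticChar F b = 1 := by
        have := quadraticChar_sq_one (F := F) hb
        rwa [sq] at this
      show ((quadraticChar F b : ℤ) : ℂ) * ((quadraticChar F b : ℤ) : ℂ) = 1
      rw [← Int.cast_mul, h1, Int.cast_one]
    have hfin : χ b * (χ b * gaussSum χ (AddChar.mulShift ψ b))
        = χ b * gaussSum χ ψ := by
      rw [show ((Units.mk0 b hb : Fˣ) : F) = b from rfl] at hu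
      rw [hu]
    rw [← mul_assoc, hq, one_mul] at hfin
    rw [hrw, hfin]
    rfl
  rw [hmain, hψ0, add_zero]

/-- Sum of `ψ (b · weightedSumSquares)` factors as a product of 1-dim Gauss sums. -/
lemma wss_gauss_sum (hF : ringChar F ≠ 2)
    (ψ : AddChar F ℂ) (hψ : ψ ≠ 1) {m : ℕ} (w : Fin m → Fˣ) {b : F} (hb : b ≠ 0) :
    (∑ x : Fin m → F, ψ (b * QuadraticMap.weightedSumSquares F w x)) =
      ∏ i : Fin m, (((quadraticChar F (b * (w i : F)) : ℤ) : ℂ) *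
        gaussSum ((quadraticChar F).ringHomComp (Int.castRingHom ℂ)) ψ) := by
  have hform : ∀ x : Fin m → F,
      ψ (b * QuadraticMap.weightedSumSquares F w x) =
      ∏ i : Fin m, ψ (b * (w i : F) * (x i) ^ 2) := by
    intro x
    rw [QuadraticMap.weightedSumSquares_apply, Finset.mul_sum, addChar_map_sum]
    refine Finset.prod_congr rfl fun i _ => ?_
    congr 1
    rw [Units.smul_def, smul_eq_mul]
    ring
  have hpi := Finset.sum_prod_piFinset (univ : Finset F)
    (fun (i : Fin m) (y : F) => ψ (b * (w i : F) * y ^ 2))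
  rw [Fintype.piFinset_univ] at hpi
  calc (∑ x : Fin m → F, ψ (b * QuadraticMap.weightedSumSquares F w x))
      = ∑ x : Fin m → F, ∏ i : Fin m, ψ (b * (w i : F) * (x i) ^ 2) :=
        Finset.sum_congr rfl fun x _ => hform x
    _ = ∏ i : Fin m, ∑ y : F, ψ (b * (w i : F) * y ^ 2) := hpi
    _ = _ := by
        refine Finset.prod_congr rfl fun i _ => ?_
        exact one_dim_gauss_scaling hF ψ hψ (mul_ne_zero hb (w i).ne_zero)

end Aux

/-- scaling property of quadratic Gauss sums: for `a ∈ Fˣ`,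
`∑_{v ∈ V} ψ(a·Q(v)) = χ(a)ⁿ · ∑_{v ∈ V} ψ(Q(v))`. -/
theorem gauss_sum_quadratic_form_scaling
    (F : Type*) [Field F] [Fintype F] [DecidableEq F]
    (hq : Odd (Fintype.card F))
    (ψ : AddChar F ℂ) (hψ : ψ ≠ 1)
    (V : Type*) [AddCommGroup V] [Module F V] [Fintype V]
    (Q : QuadraticForm F V)
    (hQ : LinearMap.BilinForm.Nondegenerate (QuadraticMap.polarBilin Q)) :
    ∀ a : F, a ≠ 0 →
      (∑ v : V, ψ (a * Q v)) =
        ((quadraticChar F a : ℤ) : ℂ) ^ (Module.finrank F V) * ∑ v : V, ψ (Q v) := by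
  intro a ha
  -- char ≠ 2 and invertibility of 2
  have hF : ringChar F ≠ 2 := by
    intro h
    have h1 := FiniteField.even_card_of_char_two h
    rcases hq with ⟨k, hk⟩
    omega
  have h2 : (2 : F) ≠ 0 := Ring.two_ne_zero hF
  haveI : Invertible (2 : F) := invertibleOfNonzero h2
  haveI : FiniteDimensional F V := Module.Finite.of_basis
    (Module.Free.chooseBasis F V)
  -- nondegeneracy transfers to the associated bilinear form
  have hsep : (QuadraticMap.associated (R := F) Q).SeparatingLeft := by
    intro x hx
    apply hQ.1 x
    intro y
    have hxy := hx y
    have h' := LinearMap.congr_fun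
      (LinearMap.congr_fun (QuadraticMap.two_nsmul_associated F Q) x) y
    simp only [LinearMap.smul_apply, smul_eq_mul] at h'
    rw [← h']
    simp [hxy]
  obtain ⟨w, ⟨e⟩⟩ := Q.equivalent_weightedSumSquares_units_of_nondegenerate' hsep
  -- transport the sums through the isometry equivalence
  have htrans : ∀ b : F, (∑ v : V, ψ (b * Q v)) =
      ∑ x : Fin (Module.finrank F V) → F,
        ψ (b * QuadraticMap.weightedSumSquares F w x) := by
    intro b
    rw [← Equiv.sum_comp e.toLinearEquiv.toEquiv
      (fun x : Fin (Module.finrank F V) → F =>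
        ψ (b * QuadraticMap.weightedSumSquares F w x))]
    refine Finset.sum_congr rfl fun v _ => ?_
    have hv : QuadraticMap.weightedSumSquares F w (e.toLinearEquiv.toEquiv v) = Q v :=
      e.map_app v
    simp only [hv]
  have h1 := htrans 1
  simp only [one_mul] at h1
  rw [htrans a, h1, wss_gauss_sum hF ψ hψ w ha]
  have h1' := wss_gauss_sum hF ψ hψ w (one_ne_zero (α := F))
  simp only [one_mul] at h1'
  rw [h1']
  rw [Finset.prod_mul_distrib, Finset.prod_mul_distrib]
  have hsplit : ∀ i : Fin (Module.finrank F V),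
      ((quadraticChar F (a * (w i : F)) : ℤ) : ℂ)
      = ((quadraticChar F a : ℤ) : ℂ) * ((quadraticChar F ((w i : F)) : ℤ) : ℂ) := by
    intro i
    rw [map_mul, Int.cast_mul]
  simp_rw [hsplit]
  rw [Finset.prod_mul_distrib, Finset.prod_const, Finset.card_univ, Fintype.card_fin]
  ring
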